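/- Let R>0 and Γ>0. For every fixed h ∈ ℝ, the rescaled energy Ê(h,r,α) tends to 2ΓR²/π as r → 0⁺, uniformly with respect to α ∈ ℝ; in particular the limit does not depend on the energy level h, so the total collision manifold is the same boundary for every energy level. -/

import Mathlib

open Real

/-- `φ₁(r) := r·e^{−1/r²}`. -/
noncomputable def phi1 (r : ℝ) : ℝ := r * Real.exp (-1 / r ^ 2)

/-- `c(r,α) := 8R² + φ₁(r)² + 4R·φ₁(r)·sin α`. -/
noncomputable def cmg (R r α : ℝ) : ℝ :=
  8 * R ^ 2 + phi1 r ^ 2 + 4 * R * phi1 r * Real.sin α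

/-- The function `l` in McGehee coordinates. -/
noncomputable def lmg (R r α : ℝ) : ℝ := 8 * R ^ 2 / (cmg R r α) ^ 2

/-- The rescaled energy
`Ê(h,r,α) := (r²/l(r,α))·[h − (Γ/(8π))·log(2R²r²e^{−2/r²}) + (Γ/(8π))·log(c(r,α))]`. -/
noncomputable def Ehat (R Γ h r α : ℝ) : ℝ :=
  r ^ 2 / lmg R r α *
    (h - Γ / (8 * π) * Real.log (2 * R ^ 2 * r ^ 2 * Real.exp (-2 / r ^ 2)) +
      Γ / (8 * π) * Real.log (cmg R r α))

/-! Since `r² / l = c² r² / (8R²)` and `log (2R²r²e^{−2/r²}) = log (2R²r²) − 2/r²`, the rescaled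
energy equals `c²/(8R²) · (r²h − (Γ/8π) r² log (2R²r²) + Γ/(4π) + (Γ/8π) r² log c)`: the
exponential factor turns the singular logarithm into the constant `Γ/(4π)`. As `r → 0`,
`φ₁(r) → 0`, so `c → 8R²` uniformly in `α` because `sin α` is bounded, while `r²h`,
`r² log (2R²r²)` and `r² log c` tend to `0`. Hence `Ê → 8R² · Γ/(4π) = 2ΓR²/π`, and uniformity in
`α` is convergence along `𝓝[≠] 0 ×ˢ ⊤`. -/

open Filter Topology

theorem abs_phi1_le (r : ℝ) : |phi1 r| ≤ |r| := by
  rw [phi1, abs_mul, abs_of_pos (exp_pos _)]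
  refine mul_le_of_le_one_right (abs_nonneg r) (exp_le_one_iff.2 ?_)
  exact div_nonpos_of_nonpos_of_nonneg (by norm_num) (sq_nonneg r)

theorem tendsto_phi1_nhds_zero : Tendsto phi1 (𝓝 0) (𝓝 0) :=
  squeeze_zero_norm abs_phi1_le (continuous_abs.tendsto' 0 0 abs_zero)

theorem abs_cmg_sub_le (R r α : ℝ) :
    |cmg R r α - 8 * R ^ 2| ≤ |phi1 r| ^ 2 + 4 * |R| * |phi1 r| := by
  have hsin : |sin α| ≤ 1 := abs_sin_le_one α
  calc |cmg R r α - 8 * R ^ 2| = |phi1 r ^ 2 + 4 * R * phi1 r * sin α| := by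
        rw [cmg]; congr 1; ring
    _ ≤ |phi1 r ^ 2| + |4 * R * phi1 r * sin α| := abs_add_le _ _
    _ ≤ |phi1 r| ^ 2 + 4 * |R| * |phi1 r| := by
        rw [abs_pow, abs_mul, abs_mul, abs_mul, abs_of_pos (by norm_num : (0:ℝ) < 4)]
        linarith [mul_le_of_le_one_right (by positivity : 0 ≤ 4 * |R| * |phi1 r|) hsin]

theorem tendsto_cmg_prod_top (R : ℝ) :
    Tendsto (fun p : ℝ × ℝ => cmg R p.1 p.2) (𝓝 0 ×ˢ ⊤) (𝓝 (8 * R ^ 2)) := by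
  have hφ : Tendsto (fun p : ℝ × ℝ => |phi1 p.1|) (𝓝 0 ×ˢ ⊤) (𝓝 0) := by
    simpa using (tendsto_phi1_nhds_zero.comp tendsto_fst).abs
  refine tendsto_iff_norm_sub_tendsto_zero.2 <|
    squeeze_zero (fun _ => norm_nonneg _) (fun p => abs_cmg_sub_le R p.1 p.2) ?_
  simpa using (hφ.pow 2).add (hφ.const_mul (4 * |R|))

theorem tendsto_sq_mul_log_const_mul_sq {a : ℝ} (ha : a ≠ 0) :
    Tendsto (fun r : ℝ => r ^ 2 * log (a * r ^ 2)) (𝓝 0) (𝓝 0) := by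
  have hcont : Continuous fun r : ℝ => a * r ^ 2 * log (a * r ^ 2) / a := by fun_prop
  convert hcont.tendsto 0 using 1
  · ext r; field_simp
  · simp

theorem Ehat_eq (R Γ h : ℝ) {r : ℝ} (hR : R ≠ 0) (hr : r ≠ 0) (α : ℝ) :
    Ehat R Γ h r α = cmg R r α ^ 2 / (8 * R ^ 2) *
      (r ^ 2 * h - Γ / (8 * π) * (r ^ 2 * log (2 * R ^ 2 * r ^ 2)) + Γ / (4 * π) +
        Γ / (8 * π) * (r ^ 2 * log (cmg R r α))) := by
  rw [Ehat, lmg, log_mul (by simp [hR, hr]) (exp_ne_zero _), log_exp, div_div_eq_mul_div]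
  field_simp
  ring

theorem tendstoUniformly_Ehat (R Γ h : ℝ) (hR : R ≠ 0) :
    TendstoUniformly (Ehat R Γ h) (fun _ => 2 * Γ * R ^ 2 / π) (𝓝[≠] 0) := by
  rw [← tendsto_prod_top_iff]
  have hF : 𝓝[≠] (0 : ℝ) ×ˢ (⊤ : Filter ℝ) ≤ 𝓝 0 ×ˢ ⊤ := prod_mono nhdsWithin_le_nhds le_rfl
  have hr : Tendsto (fun p : ℝ × ℝ => p.1) (𝓝 0 ×ˢ ⊤) (𝓝 0) := tendsto_fst
  have hc := tendsto_cmg_prod_top R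
  have hlogc : Tendsto (fun p : ℝ × ℝ => p.1 ^ 2 * log (cmg R p.1 p.2)) (𝓝 0 ×ˢ ⊤) (𝓝 0) := by
    simpa using (hr.pow 2).mul (hc.log (by positivity))
  have hlog : Tendsto (fun p : ℝ × ℝ => p.1 ^ 2 * log (2 * R ^ 2 * p.1 ^ 2)) (𝓝 0 ×ˢ ⊤) (𝓝 0) :=
    (tendsto_sq_mul_log_const_mul_sq (by positivity)).comp tendsto_fst
  have hlim := ((hc.pow 2).div_const (8 * R ^ 2)).mul
    (((((hr.pow 2).mul_const h).sub (hlog.const_mul (Γ / (8 * π)))).add_const (Γ / (4 * π))).add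
      (hlogc.const_mul (Γ / (8 * π))))
  have hL : (8 * R ^ 2) ^ 2 / (8 * R ^ 2) *
      ((0 : ℝ) ^ 2 * h - Γ / (8 * π) * 0 + Γ / (4 * π) + Γ / (8 * π) * 0) = 2 * Γ * R ^ 2 / π := by
    field_simp
    ring
  rw [← hL]
  refine (hlim.mono_left hF).congr' ?_
  filter_upwards [tendsto_fst.eventually (self_mem_nhdsWithin : {0}ᶜ ∈ 𝓝[≠] (0:ℝ))] with p hp
  exact (Ehat_eq R Γ h hR hp p.2).symm

theorem Ehat_uniform_limit_at_collision_general (R Γ : ℝ) (hR : 0 < R) :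
    ∀ h : ℝ, ∀ ε > (0 : ℝ), ∃ δ > (0 : ℝ), ∀ r : ℝ, 0 < r → r < δ → ∀ α : ℝ,
      |Ehat R Γ h r α - 2 * Γ * R ^ 2 / π| < ε := by
  intro h ε hε
  have hclose := Metric.tendstoUniformly_iff.1 (tendstoUniformly_Ehat R Γ h hR.ne') ε hε
  obtain ⟨δ, hδ, hball⟩ := (nhdsGT_basis 0).eventually_iff.1 (nhdsGT_le_nhdsNE 0 hclose)
  refine ⟨δ, hδ, fun r hr hrδ α => ?_⟩
  simpa [Real.dist_eq, abs_sub_comm] using hball ⟨hr, hrδ⟩ α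

/-- for every fixed energy level `h`, `Ê(h,r,α) → 2ΓR²/π` as `r → 0⁺`,
uniformly with respect to `α`; in particular the limit does not depend on `h`, so the
total collision manifold is the same boundary for every energy level. -/
theorem Ehat_uniform_limit_at_collision (R Γ : ℝ) (hR : 0 < R) (hΓ : 0 < Γ) :
    ∀ h : ℝ, ∀ ε > (0 : ℝ), ∃ δ > (0 : ℝ), ∀ r : ℝ, 0 < r → r < δ → ∀ α : ℝ,
      |Ehat R Γ h r α - 2 * Γ * R ^ 2 / π| < ε :=
  Ehat_uniform_limit_at_collision_general R Γ hR
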